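/- Let \(H_{\beta_K}\) be a cascade Heisenberg set in an irreducible root system. If \(\alpha, \alpha' \in H_{\beta_K}\) and \(\alpha + \alpha' \in \Delta\), then \(\alpha + \alpha' = \beta_K\). (Verify this concretely in type \(C_n\): if \(\alpha, \alpha' \in \Delta^+\) both have positive inner product with \(\beta_i = 2e_i\) and zero inner product with \(2e_k\) for \(k < i\), and \(\alpha+\alpha'\) is a root, then \(\alpha + \alpha' = 2e_i\).) -/

import Mathlib

/-- The standard basis vector `eᵢ` of `ℝ^∞` (1-based indexing). -/
noncomputable def e (i : ℕ) : ℕ → ℝ := fun m => if m = i then 1 else 0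

/-- The standard inner product (on vectors supported in `{0,…,n}`). -/
noncomputable def dotN (n : ℕ) (x y : ℕ → ℝ) : ℝ := ∑ m ∈ Finset.range (n + 1), x m * y m

/-- The root system of type `Cₙ`: `±eᵢ ± eⱼ` (`i ≠ j`) and `±2eᵢ`. -/
def DeltaC (n : ℕ) : Set (ℕ → ℝ) :=
  {v | ∃ i j, 1 ≤ i ∧ i ≤ n ∧ 1 ≤ j ∧ j ≤ n ∧
    ((i ≠ j ∧ v = e i - e j) ∨ v = e i + e j ∨ v = -e i - e j)}

/-- The positive roots of type `Cₙ`. -/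
def DeltaCpos (n : ℕ) : Set (ℕ → ℝ) :=
  {v | ∃ i j, 1 ≤ i ∧ i ≤ j ∧ j ≤ n ∧ ((i < j ∧ v = e i - e j) ∨ v = e i + e j)}

/-- `H_{βᵢ} = {α ∈ Δ⁺ ∣ (α, eᵢ) > 0, (α, eₖ) = 0 for k < i}`. -/
noncomputable def Hbeta (n i : ℕ) : Set (ℕ → ℝ) :=
  {v | v ∈ DeltaCpos n ∧ 0 < dotN n v (e i) ∧ ∀ k, 1 ≤ k → k < i → dotN n v (e k) = 0}

/-!
Every root of `Hbeta n i` has `i`-th coordinate at least `1`, so `α + α'` has `i`-th coordinate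
at least `2`; the only root of `Cₙ` with a coordinate `≥ 2` is the long root `2eᵢ` itself.
-/

lemma dotN_e_right {n j : ℕ} (hj : j ≤ n) (v : ℕ → ℝ) : dotN n v (e j) = v j := by
  simp [dotN, e, Finset.sum_ite_eq', Nat.lt_succ_of_le hj]

lemma one_le_apply_of_mem_DeltaCpos {n m : ℕ} {v : ℕ → ℝ} (hv : v ∈ DeltaCpos n)
    (hpos : 0 < v m) : 1 ≤ v m := by
  obtain ⟨a, b, -, -, -, ⟨-, rfl⟩ | rfl⟩ := hv <;>
    simp only [Pi.sub_apply, Pi.add_apply, e] at hpos ⊢ <;>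
    split_ifs at hpos ⊢ <;> linarith

lemma one_le_apply_of_mem_Hbeta {n i : ℕ} (hin : i ≤ n) {v : ℕ → ℝ} (hv : v ∈ Hbeta n i) :
    1 ≤ v i :=
  one_le_apply_of_mem_DeltaCpos hv.1 (dotN_e_right hin v ▸ hv.2.1)

lemma eq_two_smul_e_of_two_le_apply {n m : ℕ} {v : ℕ → ℝ} (hv : v ∈ DeltaC n)
    (h2 : 2 ≤ v m) : v = (2 : ℝ) • e m := by
  obtain ⟨p, q, -, -, -, -, ⟨-, rfl⟩ | rfl | rfl⟩ := hv
  · simp only [Pi.sub_apply, e] at h2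
    split_ifs at h2 <;> norm_num at h2
  · simp only [Pi.add_apply, e] at h2
    split_ifs at h2 with hp hq
    · subst hp hq
      exact (two_smul ℝ _).symm
    all_goals norm_num at h2
  · simp only [Pi.sub_apply, Pi.neg_apply, e] at h2
    split_ifs at h2 <;> norm_num at h2

theorem Hbeta_sum_eq_beta_general (n i : ℕ) (hin : i ≤ n)
    (α α' : ℕ → ℝ) (hα : α ∈ Hbeta n i) (hα' : α' ∈ Hbeta n i)
    (hsum : α + α' ∈ DeltaC n) :
    α + α' = (2 : ℝ) • e i := by
  apply eq_two_smul_e_of_two_le_apply hsum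
  have h := add_le_add (one_le_apply_of_mem_Hbeta hin hα) (one_le_apply_of_mem_Hbeta hin hα')
  rw [Pi.add_apply]
  linarith

/-- In type `Cₙ`: if `α, α' ∈ H_{βᵢ}` and `α + α'` is a root, then `α + α' = βᵢ = 2eᵢ`. -/
theorem Hbeta_sum_eq_beta (n i : ℕ) (hn : 2 ≤ n) (hi : 1 ≤ i) (hin : i ≤ n)
    (α α' : ℕ → ℝ) (hα : α ∈ Hbeta n i) (hα' : α' ∈ Hbeta n i)
    (hsum : α + α' ∈ DeltaC n) :
    α + α' = (2 : ℝ) • e i :=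
  Hbeta_sum_eq_beta_general n i hin α α' hα hα' hsum
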